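/- Let C ⊆ F^n be a perfect binary code containing the all-zero vector, λ : C → ZMod 2 a map with λ(0) = 0, and C' = {(x + y, |x| + λ(y), x) : x ∈ F^n, y ∈ C} ⊆ F^{2n+1} the Vasil'ev code. Then rank(C') = rank(C) + n + 1 if and only if the standard basis vector e_{n+1} of F^{2n+1} (the vector with 1 in the middle coordinate and 0 elsewhere) belongs to the linear span of C'; otherwise rank(C') = rank(C) + n. -/

import Mathlib

open Finset

/-- The binary vector space `F^n`. -/
abbrev F (n : ℕ) : Type := Fin n → ZMod 2

/-- Action of a coordinate permutation: `(π x) i = x (π⁻¹ i)`. -/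
def permAct {n : ℕ} (π : Equiv.Perm (Fin n)) (x : F n) : F n := fun i => x (π⁻¹ i)

/-- `(v, π)` is an isometry fixing the code `C` set-wise. -/
def IsIsoPair {n : ℕ} (C : Set (F n)) (v : F n) (π : Equiv.Perm (Fin n)) : Prop :=
  (fun x => v + permAct π x) '' C = C

/-- `C` is a single-error-correcting perfect binary code. -/
def IsPerfectCode {n : ℕ} (C : Set (F n)) : Prop :=
  ∀ x : F n, ∃! y : F n, y ∈ C ∧ hammingDist x y ≤ 1

/-- `P` is a propelinear structure on the code `C`. -/
def IsPropStructure {n : ℕ} (C : Set (F n)) (P : F n → Equiv.Perm (Fin n)) : Prop :=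
  (∀ x ∈ C, IsIsoPair C x (P x)) ∧
  (∀ x ∈ C, ∀ y ∈ C, P (x + permAct (P x) y) = P x * P y)

/-- `C` admits a propelinear structure. -/
def IsPropelinear {n : ℕ} (C : Set (F n)) : Prop :=
  ∃ P : F n → Equiv.Perm (Fin n), IsPropStructure C P

/-- The rank of a code: dimension of its linear span over GF(2). -/
noncomputable def codeRank {n : ℕ} (C : Set (F n)) : ℕ :=
  Module.finrank (ZMod 2) (Submodule.span (ZMod 2) C)

/-- The kernel of a code `C`: codewords whose translate fixes `C`. -/
def codeKernel {n : ℕ} (C : Set (F n)) : Set (F n) :=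
  {x ∈ C | (fun c => x + c) '' C = C}

/-- A propelinear structure is normalized if codewords in the same coset
of the kernel get the same permutation. -/
def IsNormalized {n : ℕ} (C : Set (F n)) (P : F n → Equiv.Perm (Fin n)) : Prop :=
  ∀ x ∈ C, ∀ y ∈ C, x + y ∈ codeKernel C → P x = P y

/-- A code is transitive if its automorphism group acts transitively on it. -/
def IsTransitive {n : ℕ} (C : Set (F n)) : Prop :=
  ∀ x ∈ C, ∀ y ∈ C, ∃ v π, IsIsoPair C v π ∧ v + permAct π x = y

/-- The (ZMod 2) weight parity `|x| = Σ_i x_i`. -/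
def wt {n : ℕ} (x : F n) : ZMod 2 := ∑ i, x i

/-- Assemble a vector of `F^(2n+1)` from a first block of `n` coordinates,
a middle coordinate and a last block of `n` coordinates. -/
def vasVec {n : ℕ} (a : F n) (b : ZMod 2) (c : F n) : F (2 * n + 1) :=
  fun i =>
    if h : (i : ℕ) < n then a ⟨i, h⟩
    else if h' : (i : ℕ) = n then b
    else c ⟨(i : ℕ) - (n + 1), by have := i.isLt; omega⟩

/-- The Vasil'ev code of `C` with function `lam`. -/
def vasCode {n : ℕ} (C : Set (F n)) (lam : F n → ZMod 2) : Set (F (2 * n + 1)) :=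
  {w | ∃ x : F n, ∃ y ∈ C, w = vasVec (x + y) (wt x + lam y) x}

/-- Assemble a vector of `F^(tm+t+m)` from blocks of `tm`, `t` and `m` coordinates. -/
def mollVec {t m : ℕ} (x : F (t * m)) (b : F t) (c : F m) : F (t * m + t + m) :=
  fun i =>
    if h : (i : ℕ) < t * m then x ⟨i, h⟩
    else if h' : (i : ℕ) < t * m + t then b ⟨(i : ℕ) - t * m, by omega⟩
    else c ⟨(i : ℕ) - (t * m + t), by have := i.isLt; omega⟩

/-- First generalized parity-check function: `p1(x)_i = Σ_j x_{ij}`. -/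
def p1 {t m : ℕ} (x : F (t * m)) : F t := fun i => ∑ j : Fin m, x (finProdFinEquiv (i, j))

/-- Second generalized parity-check function: `p2(x)_j = Σ_i x_{ij}`. -/
def p2 {t m : ℕ} (x : F (t * m)) : F m := fun j => ∑ i : Fin t, x (finProdFinEquiv (i, j))

/-- The Mollard code of `Ct` and `Cm` with function `f`. -/
def mollCode {t m : ℕ} (Ct : Set (F t)) (Cm : Set (F m)) (f : F t → F m) :
    Set (F (t * m + t + m)) :=
  {w | ∃ x : F (t * m), ∃ y ∈ Ct, ∃ z ∈ Cm, w = mollVec x (y + p1 x) (z + p2 x + f y)}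

/-!
The map `(x, y, b) ↦ (x + y, |x| + b, x)` is a linear isomorphism
`F^n × F^n × GF(2) ≃ F^(2n+1)` carrying `F^n × graph(λ|C)` onto the Vasil'ev code and
`(0, 0, 1)` to `e_{n+1}`. As `(0, 0)` lies in the graph, the span of the code is the image of
`F^n × span(graph)`, of dimension `n + dim span(graph)`. Projecting `span(graph)` to its first
factor gives `span C`, with kernel spanned by `(0, 1)` when this vector lies in `span(graph)`
and trivial otherwise.
-/

open Module

section

variable {K M N : Type*} [Field K] [AddCommGroup M] [Module K M] [AddCommGroup N] [Module K N]

theorem Submodule.finrank_top_prod [FiniteDimensional K M] (W : Submodule K N)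
    [FiniteDimensional K W] :
    finrank K ((⊤ : Submodule K M).prod W) = finrank K M + finrank K W := by
  have h := LinearMap.finrank_range_of_inj (f := (LinearMap.id : M →ₗ[K] M).prodMap W.subtype)
    (Prod.map_injective.mpr ⟨fun _ _ h => h, W.injective_subtype⟩)
  rwa [LinearMap.range_prodMap, LinearMap.range_id, W.range_subtype, finrank_prod] at h

open Classical in
theorem Submodule.finrank_eq_finrank_map_fst_add_ite [FiniteDimensional K M]
    (W : Submodule K (M × K)) :
    finrank K W =
      finrank K (W.map (LinearMap.fst K M K)) + if ((0 : M), (1 : K)) ∈ W then 1 else 0 := by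
  set f := (LinearMap.fst K M K).domRestrict W
  have hmem_ker : ∀ a : W, a ∈ LinearMap.ker f ↔ (a : M × K).1 = 0 :=
    fun _ => LinearMap.mem_ker
  rw [← f.finrank_range_add_finrank_ker, LinearMap.range_domRestrict]
  congr 1
  split_ifs with h
  · have hspan : LinearMap.ker f = K ∙ (⟨(0, 1), h⟩ : W) := by
      ext a
      rw [hmem_ker, Submodule.mem_span_singleton]
      constructor
      · intro ha
        exact ⟨(a : M × K).2, Subtype.ext (Prod.ext (by simp [ha]) (by simp))⟩
      · rintro ⟨c, rfl⟩
        simp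
    rw [hspan, finrank_span_singleton (by simp [Subtype.ext_iff])]
  · rw [finrank_eq_zero, Submodule.eq_bot_iff]
    intro a ha
    rw [hmem_ker] at ha
    by_contra hne
    have hc : (a : M × K).2 ≠ 0 := fun h2 => hne (Subtype.ext (Prod.ext ha h2))
    apply h
    convert W.smul_mem ((a : M × K).2)⁻¹ a.2 using 1
    ext <;> simp [ha, hc]

end

section Vasilev

variable {n : ℕ}

theorem vasVec_apply_left (a : F n) (b : ZMod 2) (c : F n) (i : Fin n) :
    vasVec a b c ⟨i, by omega⟩ = a i := by
  simp [vasVec]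

theorem vasVec_apply_middle (a : F n) (b : ZMod 2) (c : F n) :
    vasVec a b c ⟨n, by omega⟩ = b := by
  simp [vasVec]

theorem vasVec_apply_right (a : F n) (b : ZMod 2) (c : F n) (i : Fin n) :
    vasVec a b c ⟨n + 1 + i, by omega⟩ = c i := by
  simp only [vasVec]
  split_ifs <;> first | omega | simp

theorem vasVec_add (a a' : F n) (b b' : ZMod 2) (c c' : F n) :
    vasVec (a + a') (b + b') (c + c') = vasVec a b c + vasVec a' b' c' := by
  funext i
  simp only [vasVec, Pi.add_apply]
  split_ifs <;> rfl

theorem vasVec_smul (r : ZMod 2) (a : F n) (b : ZMod 2) (c : F n) :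
    vasVec (r • a) (r • b) (r • c) = r • vasVec a b c := by
  funext i
  simp only [vasVec, Pi.smul_apply]
  split_ifs <;> rfl

theorem vasVec_eq_zero_iff {a : F n} {b : ZMod 2} {c : F n} :
    vasVec a b c = 0 ↔ a = 0 ∧ b = 0 ∧ c = 0 := by
  constructor
  · intro h
    refine ⟨funext fun i => ?_, ?_, funext fun i => ?_⟩
    · rw [← vasVec_apply_left a b c i, h, Pi.zero_apply, Pi.zero_apply]
    · rw [← vasVec_apply_middle a b c, h, Pi.zero_apply]
    · rw [← vasVec_apply_right a b c i, h, Pi.zero_apply, Pi.zero_apply]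
  · rintro ⟨rfl, rfl, rfl⟩
    funext i
    simp [vasVec]

theorem vasVec_zero_one_zero :
    vasVec (0 : F n) 1 0 = fun i : Fin (2 * n + 1) => if (i : ℕ) = n then 1 else 0 := by
  funext i
  simp only [vasVec, Pi.zero_apply]
  split_ifs <;> first | rfl | omega

theorem wt_add (x y : F n) : wt (x + y) = wt x + wt y :=
  Finset.sum_add_distrib

theorem wt_smul (r : ZMod 2) (x : F n) : wt (r • x) = r * wt x := by
  simp [wt, Finset.mul_sum]

def vasilevMap (n : ℕ) : F n × (F n × ZMod 2) →ₗ[ZMod 2] F (2 * n + 1) where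
  toFun p := vasVec (p.1 + p.2.1) (wt p.1 + p.2.2) p.1
  map_add' p q := by
    rw [← vasVec_add]
    simp only [Prod.fst_add, Prod.snd_add, wt_add]
    congr 1 <;> abel
  map_smul' r p := by
    rw [← vasVec_smul]
    simp only [Prod.smul_fst, Prod.smul_snd, wt_smul, smul_add, smul_eq_mul, mul_add,
      RingHom.id_apply]

theorem vasilevMap_injective : Function.Injective (vasilevMap n) := by
  rw [injective_iff_map_eq_zero]
  rintro ⟨x, y, b⟩ h
  obtain ⟨hxy, hb, rfl⟩ := vasVec_eq_zero_iff.mp h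
  simp_all [wt]

noncomputable def vasilevEquiv (n : ℕ) : (F n × (F n × ZMod 2)) ≃ₗ[ZMod 2] F (2 * n + 1) :=
  (vasilevMap n).linearEquivOfInjective vasilevMap_injective
    (by simp only [finrank_prod, finrank_fin_fun, finrank_self]; omega)

theorem vasilevEquiv_apply (x y : F n) (b : ZMod 2) :
    vasilevEquiv n (x, (y, b)) = vasVec (x + y) (wt x + b) x :=
  rfl

theorem vasCode_eq_image (C : Set (F n)) (lam : F n → ZMod 2) :
    vasCode C lam = vasilevEquiv n '' (Set.univ ×ˢ C.graphOn lam) := by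
  ext w
  simp [vasCode, vasilevEquiv_apply, eq_comm]

theorem span_vasCode {C : Set (F n)} {lam : F n → ZMod 2} (h0 : 0 ∈ C) (hlam0 : lam 0 = 0) :
    Submodule.span (ZMod 2) (vasCode C lam) =
      ((⊤ : Submodule (ZMod 2) (F n)).prod (Submodule.span (ZMod 2) (C.graphOn lam))).map
        (vasilevEquiv n : F n × (F n × ZMod 2) →ₗ[ZMod 2] F (2 * n + 1)) := by
  rw [vasCode_eq_image, ← LinearEquiv.coe_coe, ← Submodule.map_span,
    Submodule.span_prod_eq (R := ZMod 2) (Set.mem_univ 0) (by simpa [hlam0] using h0),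
    Submodule.span_univ]

theorem codeRank_vasCode_eq_add_finrank {C : Set (F n)} {lam : F n → ZMod 2} (h0 : 0 ∈ C)
    (hlam0 : lam 0 = 0) :
    codeRank (vasCode C lam) = n + finrank (ZMod 2) (Submodule.span (ZMod 2) (C.graphOn lam)) := by
  rw [codeRank, span_vasCode h0 hlam0, LinearEquiv.finrank_map_eq, Submodule.finrank_top_prod,
    finrank_fin_fun]

theorem vasVec_zero_one_zero_mem_span_vasCode_iff {C : Set (F n)} {lam : F n → ZMod 2}
    (h0 : 0 ∈ C) (hlam0 : lam 0 = 0) :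
    vasVec 0 1 0 ∈ Submodule.span (ZMod 2) (vasCode C lam) ↔
      ((0 : F n), (1 : ZMod 2)) ∈ Submodule.span (ZMod 2) (C.graphOn lam) := by
  have h : vasVec 0 1 0 = vasilevEquiv n (0, (0, 1)) := by simp [vasilevEquiv_apply, wt]
  rw [span_vasCode h0 hlam0, h, Submodule.mem_map_equiv, LinearEquiv.symm_apply_apply]
  simp

open Classical in
theorem codeRank_vasCode {C : Set (F n)} {lam : F n → ZMod 2} (h0 : 0 ∈ C) (hlam0 : lam 0 = 0) :
    codeRank (vasCode C lam) = codeRank C + n +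
      if vasVec 0 1 0 ∈ Submodule.span (ZMod 2) (vasCode C lam) then 1 else 0 := by
  rw [codeRank_vasCode_eq_add_finrank h0 hlam0, Submodule.finrank_eq_finrank_map_fst_add_ite,
    Submodule.map_span, LinearMap.coe_fst, Set.image_fst_graphOn,
    vasVec_zero_one_zero_mem_span_vasCode_iff h0 hlam0, codeRank]
  ring

end Vasilev

theorem vasilev_rank_dichotomy_general {n : ℕ} (C : Set (F n))
    (h0 : (0 : F n) ∈ C)
    (lam : F n → ZMod 2) (hlam0 : lam 0 = 0) :
    (codeRank (vasCode C lam) = codeRank C + n + 1 ↔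
      (fun i : Fin (2 * n + 1) => if (i : ℕ) = n then (1 : ZMod 2) else 0) ∈
        Submodule.span (ZMod 2) (vasCode C lam)) ∧
    ((fun i : Fin (2 * n + 1) => if (i : ℕ) = n then (1 : ZMod 2) else 0) ∉
        Submodule.span (ZMod 2) (vasCode C lam) →
      codeRank (vasCode C lam) = codeRank C + n) := by
  have hrank := codeRank_vasCode h0 hlam0
  rw [vasVec_zero_one_zero] at hrank
  split_ifs at hrank with he
  · exact ⟨⟨fun _ => he, fun _ => hrank⟩, fun hne => absurd he hne⟩
  · exact ⟨⟨fun h => by omega, fun h => absurd h he⟩, fun _ => hrank⟩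

/-- The rank of the Vasil'ev code equals `rank(C) + n + 1` iff the middle
standard basis vector lies in its span; otherwise it equals `rank(C) + n`. -/
theorem vasilev_rank_dichotomy {n : ℕ} (C : Set (F n))
    (hC : IsPerfectCode C) (h0 : (0 : F n) ∈ C)
    (lam : F n → ZMod 2) (hlam0 : lam 0 = 0) :
    (codeRank (vasCode C lam) = codeRank C + n + 1 ↔
      (fun i : Fin (2 * n + 1) => if (i : ℕ) = n then (1 : ZMod 2) else 0) ∈
        Submodule.span (ZMod 2) (vasCode C lam)) ∧
    ((fun i : Fin (2 * n + 1) => if (i : ℕ) = n then (1 : ZMod 2) else 0) ∉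
        Submodule.span (ZMod 2) (vasCode C lam) →
      codeRank (vasCode C lam) = codeRank C + n) :=
  vasilev_rank_dichotomy_general C h0 lam hlam0
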